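/- arXiv:1704.02764 — 2 statements merged into one kernel-verified Lean document; each statement's English description precedes it below -/
import Mathlib

section
/- Let $\mu = \sum_i \phi_i \delta_{X_i}$ be a purely atomic probability measure on the unit square $Q_1 = [-1/2,1/2]^2$ (viewed as the flat torus $\mathbb{R}^2/\mathbb{Z}^2$) with $\phi_i > 0$ and $\sum_i \phi_i = 1$. Then there is a universal constant $c>0$ such that $\left(\sum_i \phi_i^{1/2}\right)^{2/3} \left(W_2^2(\mu, dx')\right)^{1/3} \ge c$, where $dx'$ is the Lebesgue measure on $Q_1$ and $W_2$ is the 2-Wasserstein distance. -/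
open MeasureTheory

/-- Squared 2-Wasserstein "distance" between two measures on a metric measurable space,
defined as the infimum of the quadratic transport cost over all couplings. -/
noncomputable def W2sq {α : Type*} [MeasurableSpace α] [PseudoMetricSpace α]
    (μ ν : Measure α) : ℝ :=
  sInf {c : ℝ | ∃ π : Measure (α × α), π.map Prod.fst = μ ∧ π.map Prod.snd = ν ∧
      c = ∫ p, dist p.1 p.2 ^ 2 ∂π}

/-!
Group the atoms of `μ` by position, so that `mₐ = μ {a}`. A coupling `π` of `μ` with Lebesgue
measure spreads the atom at `a` over a set of area `mₐ`; since a disc of radius `r` on the torus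
has area at most `4r²`, at least half of that mass travels a distance `≳ mₐ^{1/2}`, so the cost
of `π` is `≳ ∑ mₐ²`. Hölder's inequality `1 = ∑ mₐ ≤ (∑ mₐ^{1/2})^{2/3} (∑ mₐ²)^{1/3}` and
subadditivity of the square root, `∑ mₐ^{1/2} ≤ ∑ φᵢ^{1/2}`, conclude.
-/

open Metric Set ENNReal

namespace ENNReal

variable {ι : Type*}

theorem rpow_one_half_tsum_le (f : ι → ℝ≥0∞) :
    (∑' i, f i) ^ (1 / 2 : ℝ) ≤ ∑' i, f i ^ (1 / 2 : ℝ) := by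
  set L := ∑' i, f i ^ (1 / 2 : ℝ)
  have hsq : ∀ x : ℝ≥0∞, (x ^ (1 / 2 : ℝ)) ^ 2 = x := fun x => by
    rw [← rpow_natCast, ← rpow_mul]; norm_num
  have hle : ∑' i, f i ≤ L ^ 2 := by
    calc ∑' i, f i = ∑' i, f i ^ (1 / 2 : ℝ) * f i ^ (1 / 2 : ℝ) := by simp_rw [← sq, hsq]
      _ ≤ ∑' i, f i ^ (1 / 2 : ℝ) * L := by gcongr with i; exact ENNReal.le_tsum i
      _ = L ^ 2 := by rw [ENNReal.tsum_mul_right, sq]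
  calc (∑' i, f i) ^ (1 / 2 : ℝ) ≤ (L ^ 2) ^ (1 / 2 : ℝ) := by gcongr
    _ = L := by rw [← rpow_natCast, ← rpow_mul]; norm_num

theorem tsum_le_rpow_tsum_rpow_one_half_mul_rpow_tsum_sq (f : ι → ℝ≥0∞) :
    ∑' i, f i ≤ (∑' i, f i ^ (1 / 2 : ℝ)) ^ (2 / 3 : ℝ) * (∑' i, f i ^ 2) ^ (1 / 3 : ℝ) := by
  rw [ENNReal.tsum_eq_iSup_sum]
  refine iSup_le fun s => ?_
  have hpq : (3 / 2 : ℝ).HolderConjugate 3 := ⟨by norm_num, by norm_num, by norm_num⟩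
  calc ∑ i ∈ s, f i = ∑ i ∈ s, f i ^ (1 / 3 : ℝ) * f i ^ (2 / 3 : ℝ) := by
        refine Finset.sum_congr rfl fun i _ => ?_
        rw [← rpow_add_of_nonneg _ _ (by norm_num) (by norm_num)]; norm_num
    _ ≤ (∑ i ∈ s, (f i ^ (1 / 3 : ℝ)) ^ (3 / 2 : ℝ)) ^ (1 / (3 / 2) : ℝ) *
          (∑ i ∈ s, (f i ^ (2 / 3 : ℝ)) ^ (3 : ℝ)) ^ (1 / 3 : ℝ) :=
        inner_le_Lp_mul_Lq s _ _ hpq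
    _ = (∑ i ∈ s, f i ^ (1 / 2 : ℝ)) ^ (2 / 3 : ℝ) * (∑ i ∈ s, f i ^ 2) ^ (1 / 3 : ℝ) := by
        simp_rw [← rpow_mul, ← rpow_two]; norm_num
    _ ≤ _ := by gcongr <;> exact ENNReal.sum_le_tsum s

end ENNReal

namespace MeasureTheory.Measure

variable {α ι : Type*} [MeasurableSpace α] [MeasurableSingletonClass α]

theorem sum_smul_dirac_apply_singleton (w : ι → ℝ≥0∞) (x : ι → α) (a : α) :
    Measure.sum (fun i => w i • Measure.dirac (x i)) {a} = ∑' i : x ⁻¹' {a}, w i := by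
  rw [Measure.sum_apply _ (measurableSet_singleton a), tsum_subtype]
  refine tsum_congr fun i => ?_
  by_cases h : x i = a <;> simp [h]

theorem tsum_sum_smul_dirac_apply_singleton (w : ι → ℝ≥0∞) (x : ι → α) :
    ∑' a, Measure.sum (fun i => w i • Measure.dirac (x i)) {a} = ∑' i, w i := by
  simp_rw [sum_smul_dirac_apply_singleton]
  exact ENNReal.tsum_fiberwise w x

theorem tsum_rpow_one_half_sum_smul_dirac_apply_singleton_le (w : ι → ℝ≥0∞) (x : ι → α) :
    ∑' a, Measure.sum (fun i => w i • Measure.dirac (x i)) {a} ^ (1 / 2 : ℝ) ≤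
      ∑' i, w i ^ (1 / 2 : ℝ) := by
  simp_rw [sum_smul_dirac_apply_singleton]
  calc _ ≤ ∑' a, ∑' i : x ⁻¹' {a}, w i ^ (1 / 2 : ℝ) :=
        ENNReal.tsum_le_tsum fun a => ENNReal.rpow_one_half_tsum_le _
    _ = _ := ENNReal.tsum_fiberwise (fun i => w i ^ (1 / 2 : ℝ)) x

end MeasureTheory.Measure

theorem tsum_setLIntegral_singleton_prod_le {α β : Type*} [MeasurableSpace α]
    [MeasurableSingletonClass α] [MeasurableSpace β] (π : Measure (α × β)) (f : α × β → ℝ≥0∞) :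
    ∑' a, ∫⁻ p in {a} ×ˢ univ, f p ∂π ≤ ∫⁻ p, f p ∂π := by
  rw [ENNReal.tsum_eq_iSup_sum]
  refine iSup_le fun s => ?_
  have hdisj : (s : Set α).PairwiseDisjoint fun a => ({a} : Set α) ×ˢ (univ : Set β) :=
    fun a _ b _ hab => disjoint_singleton.2 hab |>.set_prod_left _ _
  rw [← lintegral_biUnion_finset hdisj fun a _ => (measurableSet_singleton a).prod .univ]
  exact setLIntegral_le_lintegral _ _

section QuadraticGrowth

variable {α : Type*} [PseudoMetricSpace α] [MeasurableSpace α] [OpensMeasurableSpace α]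

theorem measure_univ_sq_le_lintegral_dist_sq {ν : Measure α} [IsFiniteMeasure ν] (a : α) {K : ℝ}
    (hK : 0 < K) (hball : ∀ r, 0 ≤ r → ν (closedBall a r) ≤ ENNReal.ofReal (K * r ^ 2)) :
    ν univ ^ 2 ≤ ENNReal.ofReal (4 * K) * ∫⁻ y, ENNReal.ofReal (dist a y ^ 2) ∂ν := by
  set m := ν.real univ
  have hm : ν univ = ENNReal.ofReal m := (ofReal_measureReal).symm
  -- the ball of radius `r` carries at most half of the mass
  set r := √(m / (2 * K))
  have hr : r ^ 2 = m / (2 * K) := Real.sq_sqrt (by positivity)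
  have hfar : ENNReal.ofReal (m / 2) ≤ ν (closedBall a r)ᶜ := by
    rw [measure_compl measurableSet_closedBall (measure_ne_top _ _), hm]
    have hnear : ν (closedBall a r) ≤ ENNReal.ofReal (m / 2) := by
      refine (hball r (Real.sqrt_nonneg _)).trans_eq ?_
      rw [hr]; congr 1; field_simp
    calc ENNReal.ofReal (m / 2) = ENNReal.ofReal m - ENNReal.ofReal (m / 2) := by
          rw [← ofReal_sub _ (by positivity)]; ring_nf
      _ ≤ _ := tsub_le_tsub_left hnear _
  have hcheb : ENNReal.ofReal (r ^ 2) * ν (closedBall a r)ᶜ ≤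
      ∫⁻ y, ENNReal.ofReal (dist a y ^ 2) ∂ν := by
    refine le_trans ?_ (mul_meas_ge_le_lintegral₀ (by fun_prop) (ENNReal.ofReal (r ^ 2)))
    gcongr
    intro y hy
    rw [mem_compl_iff, mem_closedBall, not_le, dist_comm] at hy
    exact ofReal_le_ofReal (pow_le_pow_left₀ (Real.sqrt_nonneg _) hy.le 2)
  calc ν univ ^ 2 = ENNReal.ofReal (4 * K) * (ENNReal.ofReal (r ^ 2) * ENNReal.ofReal (m / 2)) := by
        rw [hm, hr, ← ofReal_pow measureReal_nonneg, ← ofReal_mul (by positivity),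
          ← ofReal_mul (by positivity)]
        congr 1; field_simp; ring
    _ ≤ _ := by gcongr; exact (mul_le_mul_right hfar _).trans hcheb

variable [MeasurableSingletonClass α]

theorem tsum_sq_map_fst_singleton_le_lintegral_dist_sq {ρ : Measure α} (π : Measure (α × α))
    [IsFiniteMeasure π] {K : ℝ} (hK : 0 < K)
    (hball : ∀ a r, 0 ≤ r → ρ (closedBall a r) ≤ ENNReal.ofReal (K * r ^ 2))
    (hsnd : π.map Prod.snd ≤ ρ) :
    ∑' a, π.map Prod.fst {a} ^ 2 ≤
      ENNReal.ofReal (4 * K) * ∫⁻ p, ENNReal.ofReal (dist p.1 p.2 ^ 2) ∂π := by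
  have hfiber : ∀ a, π.map Prod.fst {a} ^ 2 ≤
      ENNReal.ofReal (4 * K) * ∫⁻ p in {a} ×ˢ univ, ENNReal.ofReal (dist p.1 p.2 ^ 2) ∂π := by
    intro a
    set ν := (π.restrict ({a} ×ˢ univ)).map Prod.snd
    have hS : MeasurableSet (({a} : Set α) ×ˢ (univ : Set α)) :=
      (measurableSet_singleton a).prod .univ
    have hν : ν univ = π.map Prod.fst {a} := by
      rw [Measure.map_apply measurable_snd .univ, Measure.map_apply measurable_fst
        (measurableSet_singleton a), preimage_univ, Measure.restrict_apply_univ, prod_univ]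
    have hνρ : ν ≤ ρ := (Measure.map_mono Measure.restrict_le_self measurable_snd).trans hsnd
    have hcost : ∫⁻ y, ENNReal.ofReal (dist a y ^ 2) ∂ν =
        ∫⁻ p in {a} ×ˢ univ, ENNReal.ofReal (dist p.1 p.2 ^ 2) ∂π := by
      rw [lintegral_map (by fun_prop) measurable_snd]
      refine setLIntegral_congr_fun hS fun p hp => ?_
      rw [(mem_singleton_iff.1 (mem_prod.1 hp).1)]
    rw [← hν, ← hcost]
    exact measure_univ_sq_le_lintegral_dist_sq a hK fun r hr =>
      (hνρ _).trans (hball a r hr)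
  calc ∑' a, π.map Prod.fst {a} ^ 2
      ≤ ∑' a, ENNReal.ofReal (4 * K) *
          ∫⁻ p in {a} ×ˢ univ, ENNReal.ofReal (dist p.1 p.2 ^ 2) ∂π := ENNReal.tsum_le_tsum hfiber
    _ ≤ _ := by
      rw [ENNReal.tsum_mul_left]
      gcongr
      exact tsum_setLIntegral_singleton_prod_le π _

end QuadraticGrowth

theorem le_ofReal_W2sq {α : Type*} [MeasurableSpace α] [PseudoMetricSpace α]
    {μ ν : Measure α} {c : ℝ≥0∞}
    (hne : ∃ π : Measure (α × α), π.map Prod.fst = μ ∧ π.map Prod.snd = ν)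
    (hcost : ∀ π : Measure (α × α), π.map Prod.fst = μ → π.map Prod.snd = ν →
      c ≤ ENNReal.ofReal (∫ p, dist p.1 p.2 ^ 2 ∂π)) :
    c ≤ ENNReal.ofReal (W2sq μ ν) := by
  obtain ⟨π₀, h₁, h₂⟩ := hne
  set costs := {c : ℝ | ∃ π : Measure (α × α), π.map Prod.fst = μ ∧
      π.map Prod.snd = ν ∧ c = ∫ p, dist p.1 p.2 ^ 2 ∂π}
  have hne : costs.Nonempty := ⟨_, π₀, h₁, h₂, rfl⟩
  have hbdd : BddBelow costs :=
    ⟨0, by rintro _ ⟨π, -, -, rfl⟩; exact integral_nonneg fun p => sq_nonneg _⟩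
  rw [W2sq, ENNReal.ofReal_mono.map_csInf_of_continuousAt
    ENNReal.continuous_ofReal.continuousAt hne hbdd]
  refine le_sInf ?_
  rintro _ ⟨_, ⟨π, h₁, h₂, rfl⟩, rfl⟩
  exact hcost π h₁ h₂

theorem tsum_sq_measure_singleton_le_W2sq {α : Type*} [PseudoMetricSpace α] [CompactSpace α]
    [MeasurableSpace α] [OpensMeasurableSpace α]
    [MeasurableSingletonClass α] (μ ρ : Measure α) [IsProbabilityMeasure μ]
    [IsProbabilityMeasure ρ] {K : ℝ} (hK : 0 < K)
    (hball : ∀ a r, 0 ≤ r → ρ (closedBall a r) ≤ ENNReal.ofReal (K * r ^ 2)) :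
    ∑' a, μ {a} ^ 2 ≤ ENNReal.ofReal (4 * K) * ENNReal.ofReal (W2sq μ ρ) := by
  have h4K : ENNReal.ofReal (4 * K) ≠ 0 := (ofReal_pos.2 (by positivity)).ne'
  rw [mul_comm, ← ENNReal.div_le_iff h4K ofReal_ne_top]
  refine le_ofReal_W2sq ⟨μ.prod ρ, by simp [Measure.map_fst_prod], by simp [Measure.map_snd_prod]⟩
    fun π hfst hsnd => ?_
  have : IsFiniteMeasure (π.map Prod.fst) := hfst ▸ inferInstance
  have : IsFiniteMeasure π := Measure.isFiniteMeasure_of_map measurable_fst.aemeasurable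
  have hint : Integrable (fun p : α × α => dist p.1 p.2 ^ 2) π :=
    (by fun_prop : Continuous fun p : α × α => dist p.1 p.2 ^ 2).integrable_of_hasCompactSupport
      (HasCompactSupport.of_compactSpace _)
  rw [ENNReal.div_le_iff h4K ofReal_ne_top, mul_comm,
    ofReal_integral_eq_lintegral_ofReal hint (ae_of_all _ fun p => sq_nonneg _), ← hfst]
  exact tsum_sq_map_fst_singleton_le_lintegral_dist_sq π hK hball hsnd.le

instance : IsProbabilityMeasure (volume : Measure (AddCircle (1 : ℝ))) :=
  ⟨by simp [AddCircle.measure_univ]⟩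

theorem AddCircle.volume_prod_closedBall_le {T : ℝ} [Fact (0 < T)] (a : AddCircle T × AddCircle T)
    {r : ℝ} (hr : 0 ≤ r) : volume (closedBall a r) ≤ ENNReal.ofReal (4 * r ^ 2) := by
  have hmin : 0 ≤ min T (2 * r) := le_min (Fact.out : 0 < T).le (by positivity)
  rw [← closedBall_prod_same, Measure.volume_eq_prod, Measure.prod_prod,
    AddCircle.volume_closedBall, AddCircle.volume_closedBall, ← ofReal_mul hmin]
  refine ofReal_le_ofReal ?_
  calc min T (2 * r) * min T (2 * r) ≤ (2 * r) * (2 * r) :=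
        mul_le_mul (min_le_right _ _) (min_le_right _ _) hmin (by positivity)
    _ = 4 * r ^ 2 := by ring

/-- On the flat 2-torus, any purely atomic probability measure `μ = ∑ φᵢ δ_{Xᵢ}` satisfies
`(∑ φᵢ^{1/2})^{2/3} · (W₂²(μ, dx))^{1/3} ≥ c` for a universal constant `c > 0`
(stated in `ℝ≥0∞` so that a divergent sum of square roots causes no harm). -/
theorem stmt4 :
    ∃ c : ℝ, 0 < c ∧
      ∀ (φ : ℕ → ℝ) (X : ℕ → AddCircle (1 : ℝ) × AddCircle (1 : ℝ)),
        (∀ i, 0 < φ i) → HasSum φ 1 →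
        ENNReal.ofReal c ≤
          (∑' i, ENNReal.ofReal (Real.sqrt (φ i))) ^ ((2 : ℝ) / 3) *
            ENNReal.ofReal
              (W2sq (Measure.sum fun i => ENNReal.ofReal (φ i) • Measure.dirac (X i))
                (volume : Measure (AddCircle (1 : ℝ) × AddCircle (1 : ℝ)))) ^ ((1 : ℝ) / 3) := by
  refine ⟨1 / 4, by norm_num, fun φ X hφ hsum => ?_⟩
  set μ := Measure.sum fun i => ENNReal.ofReal (φ i) • Measure.dirac (X i)
  set S := ∑' i, ENNReal.ofReal √(φ i)
  set W := ENNReal.ofReal (W2sq μ volume)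
  have htotal : ∑' i, ENNReal.ofReal (φ i) = 1 := by
    rw [← ofReal_tsum_of_nonneg (fun i => (hφ i).le) hsum.summable, hsum.tsum_eq, ofReal_one]
  have : IsProbabilityMeasure μ := ⟨by simpa [μ, Measure.sum_apply] using htotal⟩
  have hmass : ∑' a, μ {a} = 1 := (Measure.tsum_sum_smul_dirac_apply_singleton _ X).trans htotal
  have hsqrt : ∑' a, μ {a} ^ (1 / 2 : ℝ) ≤ S :=
    (Measure.tsum_rpow_one_half_sum_smul_dirac_apply_singleton_le _ X).trans_eq <| tsum_congr
      fun i => by rw [Real.sqrt_eq_rpow, ofReal_rpow_of_nonneg (hφ i).le (by norm_num)]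
  have hcost : ∑' a, μ {a} ^ 2 ≤ 16 * W :=
    (tsum_sq_measure_singleton_le_W2sq μ volume four_pos
      fun a r hr => AddCircle.volume_prod_closedBall_le a hr).trans_eq (by norm_num [W])
  have hcube_root : (16 : ℝ≥0∞) ^ (1 / 3 : ℝ) ≤ 4 := by
    calc (16 : ℝ≥0∞) ^ (1 / 3 : ℝ) ≤ (4 ^ (3 : ℝ)) ^ (1 / 3 : ℝ) := by gcongr; norm_num
      _ = 4 := by rw [← rpow_mul]; norm_num
  have hholder : 1 ≤ 4 * (S ^ (2 / 3 : ℝ) * W ^ (1 / 3 : ℝ)) :=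
    calc 1 = ∑' a, μ {a} := hmass.symm
      _ ≤ (∑' a, μ {a} ^ (1 / 2 : ℝ)) ^ (2 / 3 : ℝ) * (∑' a, μ {a} ^ 2) ^ (1 / 3 : ℝ) :=
        ENNReal.tsum_le_rpow_tsum_rpow_one_half_mul_rpow_tsum_sq _
      _ ≤ S ^ (2 / 3 : ℝ) * (16 * W) ^ (1 / 3 : ℝ) := by gcongr
      _ = 16 ^ (1 / 3 : ℝ) * (S ^ (2 / 3 : ℝ) * W ^ (1 / 3 : ℝ)) := by
        rw [mul_rpow_of_nonneg _ _ (by norm_num)]; ring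
      _ ≤ 4 * (S ^ (2 / 3 : ℝ) * W ^ (1 / 3 : ℝ)) := by gcongr
  rw [one_div, ofReal_inv_of_pos four_pos, ofReal_ofNat,
    ENNReal.inv_le_iff_le_mul (by simp) (by simp)]
  simpa using hholder
end

section
/- Let $X : (a,b) \to \mathbb{R}^2$ be Lipschitz, $\phi > 0$, $r > 0$, and define the vector field $B : \mathbb{R}^2 \times (a,b) \to \mathbb{R}^3$ by $B_3(x', x_3) = \chi_{B'(X(x_3), r)}(x')$ and $B'(x', x_3) = B_3(x', x_3)\dot{X}(x_3)$. Then $\mathrm{div}\, B = 0$ in the sense of distributions on $\mathbb{R}^2 \times (a,b)$. -/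
/-!
The substitution `y' = x' - X(x₃)` is a measure-preserving shear of `ℝ² × ℝ`; after it the
integrand is `χ_{B'(0, r)}(y')` times the a.e. derivative of `x₃ ↦ ψ(y' + X(x₃), x₃)`. By Fubini
it suffices that the integral over `ℝ` of the a.e. derivative of a compactly supported Lipschitz
function vanishes, which is the integration by parts formula for Lipschitz functions tested
against the constant `1`.
-/

open MeasureTheory Set Filter Topology

theorem LipschitzWith.integral_deriv_eq_zero_of_hasCompactSupport {g g' : ℝ → ℝ} {K : NNReal}
    (hg : LipschitzWith K g) (hgc : HasCompactSupport g) (hg' : ∀ᵐ z, HasDerivAt g (g' z) z) :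
    ∫ z, g' z = 0 := by
  have hconst (z : ℝ) : lineDeriv ℝ (fun _ : ℝ => (1 : ℝ)) z (-1) = 0 :=
    ((hasFDerivAt_const (1 : ℝ) z).hasLineDerivAt (-1)).lineDeriv
  have h := (LipschitzWith.const (α := ℝ) (1 : ℝ)).integral_lineDeriv_mul_eq
    (μ := volume) hg hgc (-1)
  simp only [hconst, zero_mul, integral_zero, neg_neg, mul_one] at h
  rw [h]
  refine integral_congr_ae ?_
  filter_upwards [hg'] with z hz
  simpa using (hz.hasFDerivAt.hasLineDerivAt 1).lineDeriv.symm

section Shear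

variable {G β : Type*} [AddGroup G] [MeasurableSpace G] [MeasurableAdd₂ G] [MeasurableSpace β]
  {X : β → G} {μ : Measure G} [μ.IsAddRightInvariant] [SFinite μ] {ν : Measure β} [SFinite ν]

theorem measurePreserving_add_comp_snd (hX : Measurable X) :
    MeasurePreserving (fun p : G × β => (p.1 + X p.2, p.2)) (μ.prod ν) (μ.prod ν) := by
  have hskew : MeasurePreserving (fun p : β × G => (p.1, p.2 + X p.1)) (ν.prod μ) (ν.prod μ) :=
    (MeasurePreserving.id ν).skew_product (by fun_prop)
      (ae_of_all _ fun z => map_add_right_eq_self μ (X z))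
  exact (Measure.measurePreserving_swap.comp hskew).comp Measure.measurePreserving_swap

variable [MeasurableNeg G]

theorem measurableEmbedding_add_comp_snd (hX : Measurable X) :
    MeasurableEmbedding (fun p : G × β => (p.1 + X p.2, p.2)) := by
  have hsurj : Function.Surjective (fun p : G × β => (p.1 + X p.2, p.2)) :=
    fun p => ⟨(p.1 - X p.2, p.2), by simp⟩
  exact MeasurableEmbedding.of_measurable_inverse (g := fun p => (p.1 - X p.2, p.2))
    (by fun_prop) (hsurj.range_eq ▸ MeasurableSet.univ) (by fun_prop) (fun p => by simp)

theorem integral_prod_comp_add_comp_snd {F : Type*} [NormedAddCommGroup F] [NormedSpace ℝ F]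
    (hX : Measurable X) (f : G × β → F) :
    ∫ p, f (p.1 + X p.2, p.2) ∂(μ.prod ν) = ∫ p, f p ∂(μ.prod ν) :=
  (measurePreserving_add_comp_snd hX).integral_comp (measurableEmbedding_add_comp_snd hX) f

end Shear

theorem HasCompactSupport.exists_eq_zero_of_lt_norm_snd {E F G : Type*} [NormedAddCommGroup E]
    [NormedAddCommGroup F] [Zero G] {f : E × F → G} (hf : HasCompactSupport f) :
    ∃ R, ∀ u z, R < ‖z‖ → f (u, z) = 0 := by
  obtain ⟨R, hR⟩ := hf.isBounded.subset_closedBall 0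
  refine ⟨R, fun u z hz => image_eq_zero_of_notMem_tsupport fun hmem => hz.not_ge ?_⟩
  exact (norm_snd_le (u, z)).trans (mem_closedBall_zero_iff.1 (hR hmem))

section Curve

variable {E : Type*} [NormedAddCommGroup E] [NormedSpace ℝ E]
  {X X' : ℝ → E} {L : NNReal} {ψ : E × ℝ → ℝ}

theorem integral_fderiv_apply_along_curve_eq_zero (hX : LipschitzWith L X)
    (hX' : ∀ᵐ z, HasDerivAt X (X' z) z) (hψ : ContDiff ℝ 1 ψ) (hψc : HasCompactSupport ψ)
    (y : E) : ∫ z, fderiv ℝ ψ (y + X z, z) (X' z, 1) = 0 := by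
  obtain ⟨K, hK⟩ := hψ.lipschitzWith_of_hasCompactSupport hψc one_ne_zero
  obtain ⟨R, hR⟩ := hψc.exists_eq_zero_of_lt_norm_snd
  have hγ : LipschitzWith (max (1 * L) 1) fun z => (y + X z, z) :=
    ((isometry_add_left y).lipschitz.comp hX).prodMk LipschitzWith.id
  refine (hK.comp hγ).integral_deriv_eq_zero_of_hasCompactSupport
    (.intro (isCompact_closedBall 0 R) fun z hz => hR _ _ (by simpa using hz)) ?_
  filter_upwards [hX'] with z hz
  exact (hψ.differentiable one_ne_zero _).hasFDerivAt.comp_hasDerivAt z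
    ((hz.const_add y).prodMk (hasDerivAt_id z))

theorem exists_integrable_bound_fderiv_apply_along_curve (hX : LipschitzWith L X)
    (hX' : ∀ᵐ z, HasDerivAt X (X' z) z) (hψ : ContDiff ℝ 1 ψ) (hψc : HasCompactSupport ψ) :
    ∃ g : ℝ → ℝ, Integrable g ∧ ∀ᵐ z, ∀ y : E, ‖fderiv ℝ ψ (y + X z, z) (X' z, 1)‖ ≤ g z := by
  obtain ⟨M, hM⟩ := (hψc.fderiv ℝ).exists_bound_of_continuous (hψ.continuous_fderiv one_ne_zero)
  obtain ⟨R, hR⟩ := (hψc.fderiv ℝ).exists_eq_zero_of_lt_norm_snd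
  refine ⟨(Metric.closedBall 0 R).indicator fun _ => M * max L 1,
    (integrable_indicator_iff measurableSet_closedBall).2
      (integrableOn_const measure_closedBall_lt_top.ne), ?_⟩
  filter_upwards [hX'] with z hz y
  by_cases hzR : z ∈ Metric.closedBall 0 R
  · rw [indicator_of_mem hzR]
    calc ‖fderiv ℝ ψ (y + X z, z) (X' z, 1)‖ ≤ ‖fderiv ℝ ψ (y + X z, z)‖ * ‖(X' z, (1 : ℝ))‖ :=
          ContinuousLinearMap.le_opNorm _ _
      _ ≤ M * max L 1 := by
          refine mul_le_mul (hM _) ?_ (norm_nonneg _) ((norm_nonneg _).trans (hM 0))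
          simpa [Prod.norm_def] using max_le_max_right 1 (hz.le_of_lipschitz hX)
  · rw [indicator_of_notMem hzR, hR _ _ (by simpa using hzR)]
    simp

variable [MeasurableSpace E] [BorelSpace E] [CompleteSpace E] [SecondCountableTopology E]

theorem integrable_mul_fderiv_apply_along_curve {μ : Measure E} [SFinite μ] {c : E → ℝ}
    (hc : Integrable c μ) (hX : LipschitzWith L X) (hX' : ∀ᵐ z, HasDerivAt X (X' z) z)
    (hψ : ContDiff ℝ 1 ψ) (hψc : HasCompactSupport ψ) :
    Integrable (fun p : E × ℝ => c p.1 * fderiv ℝ ψ (p.1 + X p.2, p.2) (X' p.2, 1))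
      (μ.prod volume) := by
  obtain ⟨g, hg, hbound⟩ := exists_integrable_bound_fderiv_apply_along_curve hX hX' hψ hψc
  have hX'_meas : AEStronglyMeasurable X' volume :=
    (aestronglyMeasurable_deriv X volume).congr (hX'.mono fun z hz => hz.deriv)
  have hDψ_meas : AEStronglyMeasurable (fun p : E × ℝ => fderiv ℝ ψ (p.1 + X p.2, p.2))
      (μ.prod volume) :=
    ((hψ.continuous_fderiv one_ne_zero).comp
      (by have := hX.continuous; fun_prop)).aestronglyMeasurable
  refine (hc.norm.mul_prod hg).mono' (hc.aestronglyMeasurable.comp_fst.mul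
    (isBoundedBilinearMap_apply.continuous.comp_aestronglyMeasurable
      (hDψ_meas.prodMk (hX'_meas.comp_snd.prodMk aestronglyMeasurable_const)))) ?_
  filter_upwards [Measure.quasiMeasurePreserving_snd.ae hbound] with p hp
  rw [norm_mul]
  exact mul_le_mul_of_nonneg_left (hp p.1) (norm_nonneg _)

/-- With `c` the indicator of the disk `B'(0, r)` this is the paper's field `(B', B₃)`. -/
def transportField (c : E → ℝ) (X X' : ℝ → E) (x : E × ℝ) : E × ℝ :=
  c (x.1 - X x.2) • (X' x.2, 1)

theorem integral_fderiv_apply_transportField_eq_zero {μ : Measure E} [μ.IsAddRightInvariant]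
    [SFinite μ] {c : E → ℝ} (hc : Integrable c μ) (hX : LipschitzWith L X)
    (hX' : ∀ᵐ z, HasDerivAt X (X' z) z) (hψ : ContDiff ℝ 1 ψ) (hψc : HasCompactSupport ψ) :
    ∫ x, fderiv ℝ ψ x (transportField c X X' x) ∂(μ.prod volume) = 0 := by
  rw [← integral_prod_comp_add_comp_snd hX.continuous.measurable]
  simp only [transportField, add_sub_cancel_right, map_smul, smul_eq_mul]
  rw [integral_prod _ (integrable_mul_fderiv_apply_along_curve hc hX hX' hψ hψc)]
  simp only [integral_const_mul, integral_fderiv_apply_along_curve_eq_zero hX hX' hψ hψc,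
    mul_zero, integral_zero]

end Curve

theorem integrable_indicator_disk (r : ℝ) :
    Integrable fun v : ℝ × ℝ => if v.1 ^ 2 + v.2 ^ 2 < r ^ 2 then (1 : ℝ) else 0 := by
  have hbdd : Bornology.IsBounded {v : ℝ × ℝ | v.1 ^ 2 + v.2 ^ 2 < r ^ 2} := by
    refine (Metric.isBounded_closedBall (x := 0) (r := |r|)).subset fun v hv => ?_
    have h1 : v.1 ^ 2 < r ^ 2 := by nlinarith [sq_nonneg v.2, hv.out]
    have h2 : v.2 ^ 2 < r ^ 2 := by nlinarith [sq_nonneg v.1, hv.out]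
    simpa [Prod.norm_def] using ⟨(sq_lt_sq.1 h1).le, (sq_lt_sq.1 h2).le⟩
  exact (integrable_indicator_iff (measurableSet_lt (by fun_prop) measurable_const)).2
    (integrableOn_const hbdd.measure_lt_top.ne)

theorem stmt15_general (r : ℝ)
    (X : ℝ → ℝ × ℝ) (L : NNReal) (hX : LipschitzWith L X)
    (X' : ℝ → ℝ × ℝ) (hX' : ∀ᵐ z : ℝ, HasDerivAt X (X' z) z)
    (ψ : (ℝ × ℝ) × ℝ → ℝ) (hψ : ContDiff ℝ 1 ψ) (hψc : HasCompactSupport ψ) :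
    ∫ x : (ℝ × ℝ) × ℝ,
      (if (x.1.1 - (X x.2).1) ^ 2 + (x.1.2 - (X x.2).2) ^ 2 < r ^ 2 then (1 : ℝ) else 0) *
        (fderiv ℝ ψ x ((0 : ℝ × ℝ), 1) + fderiv ℝ ψ x (X' x.2, 0)) = 0 := by
  have hsplit (x : (ℝ × ℝ) × ℝ) :
      fderiv ℝ ψ x (X' x.2, 1) = fderiv ℝ ψ x ((0 : ℝ × ℝ), 1) + fderiv ℝ ψ x (X' x.2, 0) := by
    rw [← map_add]; simp
  rw [Measure.volume_eq_prod]
  refine (integral_congr_ae (ae_of_all _ fun x => ?_)).trans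
    (integral_fderiv_apply_transportField_eq_zero (integrable_indicator_disk r) hX hX' hψ hψc)
  simp only [transportField, map_smul, smul_eq_mul, hsplit, Prod.fst_sub, Prod.snd_sub]

/-- The magnetic field of a moving disk of flux: if `B₃(x', x₃) = χ_{B'(X(x₃), r)}(x')`
and `B'(x', x₃) = B₃(x', x₃) Ẋ(x₃)` for a Lipschitz curve `X`, then `div B = 0` in the
sense of distributions on `ℝ² × (a,b)`: that is, `∫ (B₃ ∂₃ψ + B' · ∇'ψ) dx = 0` for
every `ψ ∈ C¹_c(ℝ² × (a,b))`. -/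
theorem stmt15 (a b : ℝ) (hab : a < b) (r : ℝ) (hr : 0 < r) (φ : ℝ) (hφ : 0 < φ)
    (X : ℝ → ℝ × ℝ) (L : NNReal) (hX : LipschitzWith L X)
    (X' : ℝ → ℝ × ℝ) (hX' : ∀ᵐ z : ℝ, HasDerivAt X (X' z) z)
    (ψ : (ℝ × ℝ) × ℝ → ℝ) (hψ : ContDiff ℝ 1 ψ) (hψc : HasCompactSupport ψ)
    (hψz : ∀ (x' : ℝ × ℝ) (z : ℝ), z ∉ Ioo a b → ψ (x', z) = 0) :
    ∫ x : (ℝ × ℝ) × ℝ,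
      (if (x.1.1 - (X x.2).1) ^ 2 + (x.1.2 - (X x.2).2) ^ 2 < r ^ 2 then (1 : ℝ) else 0) *
        (fderiv ℝ ψ x ((0 : ℝ × ℝ), 1) + fderiv ℝ ψ x (X' x.2, 0)) = 0 :=
  stmt15_general r X L hX X' hX' ψ hψ hψc
end
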